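/- arXiv:1810.11471 — 4 statements merged into one kernel-verified Lean document; each statement's English description precedes it below -/
import Mathlib

section
/- Suppose a partition {A_1,…,A_N} of Ω with probabilities π_n = P1(A_n) > 0 and z-values z_n = E[Z | A_n] satisfies Σ_n π_n z_n = 0, and some z_j ≠ z_k. Consider minimizing Σ_n π_n w_n over nonnegative wages (w_1,…,w_N) subject to Σ_n π_n √(w_n) z_n ≥ c for a given c > 0. Then the minimal value equals c² · (Σ_n π_n max{0, z_n}²)^{-1}, attained by w_n = c² max{0,z_n}² (Σ_m π_m max{0,z_m}²)^{-2}. -/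
/-!
Only the states with `z n > 0` help to satisfy the incentive constraint, so the constraint
still holds with `z` replaced by `max 0 z`. Cauchy–Schwarz for the weights `π` then gives
`c² ≤ (∑ π √w max 0 z)² ≤ (∑ π w) (∑ π (max 0 z)²)`, and equality holds when `√w` is
proportional to `max 0 z`, which gives the optimal wage. The normalizing sum is positive
because a nonconstant `z` with `π`-mean zero takes a positive value.
-/

open Finset

section IncentiveProblem

variable {ι : Type*} [Fintype ι] {p z : ι → ℝ}

lemma exists_pos_of_sum_mul_eq_zero (hp : ∀ n, 0 < p n) (hzero : ∑ n, p n * z n = 0)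
    {j k : ι} (hjk : z j ≠ z k) : ∃ n, 0 < z n := by
  by_contra! hle
  have hterms := (sum_eq_zero_iff_of_nonpos fun n _ =>
    mul_nonpos_of_nonneg_of_nonpos (hp n).le (hle n)).mp hzero
  have hz : ∀ n, z n = 0 := fun n =>
    (mul_eq_zero.mp (hterms n (mem_univ n))).resolve_left (hp n).ne'
  exact hjk (by rw [hz j, hz k])

lemma sum_mul_max_zero_sq_pos (hp : ∀ n, 0 < p n) (hzero : ∑ n, p n * z n = 0)
    {j k : ι} (hjk : z j ≠ z k) : 0 < ∑ n, p n * max 0 (z n) ^ 2 := by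
  obtain ⟨m, hm⟩ := exists_pos_of_sum_mul_eq_zero hp hzero hjk
  exact sum_pos' (fun n _ => mul_nonneg (hp n).le (sq_nonneg _))
    ⟨m, mem_univ m, mul_pos (hp m) (pow_pos (lt_max_of_lt_right hm) 2)⟩

lemma max_zero_mul_self (x : ℝ) : max 0 x * x = max 0 x ^ 2 := by
  rcases le_total x 0 with hx | hx
  · rw [max_eq_left hx]; ring
  · rw [max_eq_right hx]; ring

lemma sq_le_sum_mul_mul_sum_mul_max_zero_sq (hp : ∀ n, 0 ≤ p n) {w : ι → ℝ}
    (hw : ∀ n, 0 ≤ w n) {c : ℝ} (hc : 0 ≤ c) (hic : c ≤ ∑ n, p n * √(w n) * z n) :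
    c ^ 2 ≤ (∑ n, p n * w n) * ∑ n, p n * max 0 (z n) ^ 2 := by
  have hic' : c ≤ ∑ n, p n * √(w n) * max 0 (z n) :=
    hic.trans <| sum_le_sum fun n _ =>
      mul_le_mul_of_nonneg_left (le_max_right _ _) (mul_nonneg (hp n) (Real.sqrt_nonneg _))
  calc c ^ 2 ≤ (∑ n, p n * √(w n) * max 0 (z n)) ^ 2 := pow_le_pow_left₀ hc hic' 2
    _ ≤ (∑ n, p n * w n) * ∑ n, p n * max 0 (z n) ^ 2 :=
      sum_sq_le_sum_mul_sum_of_sq_le_mul _ (fun n _ => mul_nonneg (hp n) (hw n))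
        (fun n _ => mul_nonneg (hp n) (sq_nonneg _)) fun n _ =>
          le_of_eq (by rw [mul_pow, mul_pow, Real.sq_sqrt (hw n)]; ring)

lemma sum_mul_sqrt_wage_mul_eq {S : ℝ} (c : ℝ) (hc : 0 ≤ c) (hS : 0 < S)
    (hSdef : ∑ n, p n * max 0 (z n) ^ 2 = S) :
    ∑ n, p n * √(c ^ 2 * max 0 (z n) ^ 2 / S ^ 2) * z n = c := by
  have hsqrt : ∀ n, √(c ^ 2 * max 0 (z n) ^ 2 / S ^ 2) = c / S * max 0 (z n) := fun n => by
    rw [show c ^ 2 * max 0 (z n) ^ 2 / S ^ 2 = (c / S * max 0 (z n)) ^ 2 by ring,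
      Real.sqrt_sq (mul_nonneg (div_nonneg hc hS.le) (le_max_left _ _))]
  calc ∑ n, p n * √(c ^ 2 * max 0 (z n) ^ 2 / S ^ 2) * z n
      = c / S * ∑ n, p n * (max 0 (z n) * z n) := by
        rw [mul_sum]; exact sum_congr rfl fun n _ => by rw [hsqrt]; ring
    _ = c := by simp only [max_zero_mul_self, hSdef]; field_simp

lemma sum_mul_wage_eq {S : ℝ} (c : ℝ) (hS : S ≠ 0) (hSdef : ∑ n, p n * max 0 (z n) ^ 2 = S) :
    ∑ n, p n * (c ^ 2 * max 0 (z n) ^ 2 / S ^ 2) = c ^ 2 / S := by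
  calc ∑ n, p n * (c ^ 2 * max 0 (z n) ^ 2 / S ^ 2)
      = c ^ 2 / S ^ 2 * ∑ n, p n * max 0 (z n) ^ 2 := by
        rw [mul_sum]; exact sum_congr rfl fun n _ => by ring
    _ = c ^ 2 / S := by rw [hSdef]; field_simp

end IncentiveProblem

theorem sqrt_utility_min_incentive_cost_general {N : ℕ} (p z : Fin N → ℝ) (c : ℝ) (hc : 0 < c)
    (hp : ∀ n, 0 < p n)
    (hzero : ∑ n, p n * z n = 0) (j k : Fin N) (hjk : z j ≠ z k) :
    let S := ∑ n, p n * (max 0 (z n)) ^ 2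
    let wstar : Fin N → ℝ := fun n => c ^ 2 * (max 0 (z n)) ^ 2 / S ^ 2
    IsLeast {v | ∃ w : Fin N → ℝ, (∀ n, 0 ≤ w n) ∧
        c ≤ ∑ n, p n * Real.sqrt (w n) * z n ∧ v = ∑ n, p n * w n} (c ^ 2 / S) ∧
      (∀ n, 0 ≤ wstar n) ∧ (c ≤ ∑ n, p n * Real.sqrt (wstar n) * z n) ∧
      ∑ n, p n * wstar n = c ^ 2 / S := by
  intro S wstar
  have hS : 0 < S := sum_mul_max_zero_sq_pos hp hzero hjk
  have hwstar_nonneg : ∀ n, 0 ≤ wstar n := fun n => by positivity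
  have hwstar_ic : ∑ n, p n * √(wstar n) * z n = c :=
    sum_mul_sqrt_wage_mul_eq c hc.le hS rfl
  have hwstar_cost : ∑ n, p n * wstar n = c ^ 2 / S := sum_mul_wage_eq c hS.ne' rfl
  refine ⟨⟨⟨wstar, hwstar_nonneg, hwstar_ic.ge, hwstar_cost.symm⟩, ?_⟩,
    hwstar_nonneg, hwstar_ic.ge, hwstar_cost⟩
  rintro _ ⟨w, hw, hic, rfl⟩
  rw [div_le_iff₀ hS]
  exact sq_le_sum_mul_mul_sum_mul_max_zero_sq (fun n => (hp n).le) hw hc.le hic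

/-- With square-root utility, the wage-minimization problem subject to the
incentive constraint has minimal value `c² (∑ₙ πₙ max{0,zₙ}²)⁻¹`, attained by
`wₙ = c² max{0,zₙ}² (∑ₘ πₘ max{0,zₘ}²)⁻²`. -/
theorem sqrt_utility_min_incentive_cost {N : ℕ} (p z : Fin N → ℝ) (c : ℝ) (hc : 0 < c)
    (hp : ∀ n, 0 < p n) (hsum : ∑ n, p n = 1)
    (hzero : ∑ n, p n * z n = 0) (j k : Fin N) (hjk : z j ≠ z k) :
    let S := ∑ n, p n * (max 0 (z n)) ^ 2
    let wstar : Fin N → ℝ := fun n => c ^ 2 * (max 0 (z n)) ^ 2 / S ^ 2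
    IsLeast {v | ∃ w : Fin N → ℝ, (∀ n, 0 ≤ w n) ∧
        c ≤ ∑ n, p n * Real.sqrt (w n) * z n ∧ v = ∑ n, p n * w n} (c ^ 2 / S) ∧
      (∀ n, 0 ≤ wstar n) ∧ (c ≤ ∑ n, p n * Real.sqrt (wstar n) * z n) ∧
      ∑ n, p n * wstar n = c ^ 2 / S :=
  sqrt_utility_min_incentive_cost_general p z c hc hp hzero j k hjk
end

section
/- With Z uniformly distributed on [-1/2, 1/2], partition the interval into N consecutive subintervals with cut points -1/2 = ẑ_0 < ẑ_1 < … < ẑ_N = 1/2; the probability of the n-th cell is π_n = ẑ_n - ẑ_{n-1} and its conditional mean is z_n = (ẑ_{n-1}+ẑ_n)/2. Then the choice of interior cut points maximizing Σ_{n=1}^N π_n max{0, z_n}² is ẑ_n = (2n-1)/(4N-2) for n = 1,…,N-1. -/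
/-!
Put `w = 1 / (2N - 1)`, `g(x) = x³/3 - w²x/4` and `φ(x) = g(max x (-w/2))`. The identity
`(b - a)((a + b)/2)² = g b - g a + w³/6 - (b - a - w)²(b - a + 2w)/12` bounds the value of
every cell `[a, b]` by `φ b - φ a + w³/6`; clamping at `-w/2` is harmless because a cell's value
only grows when its left end moves up towards `0`. Summing over the cells telescopes to a bound
that depends only on the endpoints `∓1/2`. The proposed partition attains it: its first cell
`[-1/2, w/2]` has value `0 = φ(w/2) - φ(-1/2) + w³/6`, and all other cells lie in `[0, ∞)`
and have length exactly `w`.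
-/

open Finset

noncomputable def cellValue (a b : ℝ) : ℝ := (b - a) * max 0 ((a + b) / 2) ^ 2

noncomputable def cubicPotential (w x : ℝ) : ℝ := x ^ 3 / 3 - w ^ 2 * x / 4

noncomputable def clampedPotential (w x : ℝ) : ℝ := cubicPotential w (max x (-(w / 2)))

theorem Fin.sum_succ_sub_castSucc {G : Type*} [AddCommGroup G] (M : ℕ) (g : Fin (M + 1) → G) :
    ∑ n : Fin M, (g n.succ - g n.castSucc) = g (Fin.last M) - g 0 := by
  induction M with
  | zero => simp
  | succ M ih =>
    have := ih (g ∘ Fin.castSucc)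
    simp only [Function.comp_apply, Fin.castSucc_zero] at this
    rw [Fin.sum_univ_castSucc]
    simp only [Fin.succ_castSucc, this, Fin.succ_last]
    abel

theorem cubicPotential_sub_add (w a b : ℝ) :
    cubicPotential w b - cubicPotential w a + w ^ 3 / 6 =
      (b - a) * ((a + b) / 2) ^ 2 + (b - a - w) ^ 2 * (b - a + 2 * w) / 12 := by
  unfold cubicPotential
  ring

theorem cellValue_le_cubicPotential {w a b : ℝ} (hw : 0 ≤ w) (hab : a ≤ b) :
    cellValue a b ≤ cubicPotential w b - cubicPotential w a + w ^ 3 / 6 := by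
  have hsq : max 0 ((a + b) / 2) ^ 2 ≤ ((a + b) / 2) ^ 2 := by
    rcases le_total ((a + b) / 2) 0 with h | h <;> simp [h, sq_nonneg]
  have hdefect : 0 ≤ (b - a - w) ^ 2 * (b - a + 2 * w) / 12 := by
    have : 0 ≤ b - a + 2 * w := by linarith
    positivity
  rw [cubicPotential_sub_add]
  unfold cellValue
  linarith [mul_le_mul_of_nonneg_left hsq (sub_nonneg.2 hab)]

theorem cellValue_le_cellValue_left {a b c : ℝ} (hac : a ≤ c) (hc : c ≤ 0) (hcb : c ≤ b) :
    cellValue a b ≤ cellValue c b := by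
  unfold cellValue
  rcases le_total (a + b) 0 with hsum | hsum
  · rw [max_eq_left (by linarith : (a + b) / 2 ≤ 0), zero_pow two_ne_zero, mul_zero]
    exact mul_nonneg (sub_nonneg.2 hcb) (sq_nonneg _)
  · rw [max_eq_right (by linarith : 0 ≤ (a + b) / 2), max_eq_right (by linarith : 0 ≤ (c + b) / 2)]
    -- `x ↦ (b - x)(b + x)²` has derivative `(b + x)(b - 3x) ≥ 0` on `[a, c]`
    nlinarith [mul_nonneg (sub_nonneg.2 hac) hsum, mul_nonneg (sub_nonneg.2 hac) (neg_nonneg.2 hc)]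

theorem cellValue_le_cellValue_max {a b c : ℝ} (hc : c ≤ 0) (hab : a ≤ b) :
    cellValue a b ≤ cellValue (max a c) (max b c) := by
  rcases le_total b c with hbc | hcb
  · have hmid : (a + b) / 2 ≤ 0 := by linarith
    simp [cellValue, max_eq_right hbc, max_eq_right (hab.trans hbc), max_eq_left hmid]
  · rw [max_eq_left hcb]
    rcases le_total a c with hac | hca
    · rw [max_eq_right hac]
      exact cellValue_le_cellValue_left hac hc hcb
    · rw [max_eq_left hca]

theorem cellValue_le_clampedPotential {w a b : ℝ} (hw : 0 ≤ w) (hab : a ≤ b) :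
    cellValue a b ≤ clampedPotential w b - clampedPotential w a + w ^ 3 / 6 :=
  (cellValue_le_cellValue_max (by linarith) hab).trans
    (cellValue_le_cubicPotential hw (max_le_max_right _ hab))

theorem sum_clampedPotential_sub_add (w : ℝ) {N : ℕ} (z : Fin (N + 1) → ℝ) :
    ∑ n : Fin N, (clampedPotential w (z n.succ) - clampedPotential w (z n.castSucc) + w ^ 3 / 6) =
      clampedPotential w (z (Fin.last N)) - clampedPotential w (z 0) + N * (w ^ 3 / 6) := by
  rw [sum_add_distrib, Fin.sum_succ_sub_castSucc N (fun i => clampedPotential w (z i))]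
  simp

theorem sum_cellValue_le_of_monotone {w : ℝ} (hw : 0 ≤ w) {N : ℕ} {z : Fin (N + 1) → ℝ}
    (hz : Monotone z) :
    ∑ n : Fin N, cellValue (z n.castSucc) (z n.succ) ≤
      clampedPotential w (z (Fin.last N)) - clampedPotential w (z 0) + N * (w ^ 3 / 6) := by
  rw [← sum_clampedPotential_sub_add]
  exact sum_le_sum fun n _ => cellValue_le_clampedPotential hw (hz n.castSucc_le_succ)

theorem cellValue_eq_clampedPotential_of_nonneg {w a : ℝ} (hw : 0 ≤ w) (ha : 0 ≤ a) :
    cellValue a (a + w) = clampedPotential w (a + w) - clampedPotential w a + w ^ 3 / 6 := by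
  have hclamp : ∀ x, 0 ≤ x → max x (-(w / 2)) = x := fun x hx => max_eq_left (by linarith)
  rw [clampedPotential, clampedPotential, hclamp a ha, hclamp (a + w) (by linarith),
    cubicPotential_sub_add, cellValue, max_eq_right (by linarith)]
  ring

theorem cellValue_eq_clampedPotential_of_le {w a : ℝ} (hw : 0 ≤ w) (ha : a ≤ -(w / 2)) :
    cellValue a (w / 2) = clampedPotential w (w / 2) - clampedPotential w a + w ^ 3 / 6 := by
  rw [clampedPotential, clampedPotential, max_eq_right ha, max_eq_left (by linarith),
    cubicPotential_sub_add, cellValue, max_eq_left (by linarith)]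
  ring

noncomputable def optimalCut (N i : ℕ) : ℝ :=
  if i = 0 then -(1 / 2) else (2 * i - 1) / (4 * N - 2)

noncomputable def cellWidth (N : ℕ) : ℝ := 1 / (2 * N - 1)

theorem cellWidth_pos {N : ℕ} (hN : 1 ≤ N) : 0 < cellWidth N := by
  have : (1 : ℝ) ≤ N := by exact_mod_cast hN
  rw [cellWidth]
  exact one_div_pos.2 (by linarith)

theorem cellWidth_le_one {N : ℕ} (hN : 1 ≤ N) : cellWidth N ≤ 1 := by
  have : (1 : ℝ) ≤ N := by exact_mod_cast hN
  rw [cellWidth]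
  exact div_le_one_of_le₀ (by linarith) (by linarith)

theorem optimalCut_zero (N : ℕ) : optimalCut N 0 = -(1 / 2) := if_pos rfl

theorem optimalCut_of_ne_zero {N i : ℕ} (hN : 1 ≤ N) (hi : i ≠ 0) :
    optimalCut N i = (2 * i - 1) / 2 * cellWidth N := by
  have : (1 : ℝ) ≤ N := by exact_mod_cast hN
  have h2 : (2 * N - 1 : ℝ) ≠ 0 := by linarith
  have h4 : (4 * N - 2 : ℝ) ≠ 0 := by linarith
  rw [optimalCut, if_neg hi, cellWidth]
  field_simp
  ring

theorem optimalCut_one {N : ℕ} (hN : 1 ≤ N) : optimalCut N 1 = cellWidth N / 2 := by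
  rw [optimalCut_of_ne_zero hN one_ne_zero]
  ring

theorem optimalCut_succ {N i : ℕ} (hN : 1 ≤ N) (hi : i ≠ 0) :
    optimalCut N (i + 1) = optimalCut N i + cellWidth N := by
  rw [optimalCut_of_ne_zero hN hi, optimalCut_of_ne_zero hN i.succ_ne_zero]
  push_cast
  ring

theorem optimalCut_self {N : ℕ} (hN : 1 ≤ N) : optimalCut N N = 1 / 2 := by
  have : (1 : ℝ) ≤ N := by exact_mod_cast hN
  rw [optimalCut_of_ne_zero hN (by omega), cellWidth]
  field_simp
  exact div_self (by linarith)

theorem optimalCut_nonneg {N i : ℕ} (hN : 1 ≤ N) (hi : i ≠ 0) : 0 ≤ optimalCut N i := by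
  have : (1 : ℝ) ≤ i := by exact_mod_cast Nat.one_le_iff_ne_zero.2 hi
  rw [optimalCut_of_ne_zero hN hi]
  exact mul_nonneg (by linarith) (cellWidth_pos hN).le

theorem monotone_optimalCut {N : ℕ} (hN : 1 ≤ N) : Monotone (optimalCut N) := by
  refine monotone_nat_of_le_succ fun i => ?_
  rcases eq_or_ne i 0 with rfl | hi
  · rw [optimalCut_zero, zero_add, optimalCut_one hN]
    linarith [cellWidth_pos hN]
  · rw [optimalCut_succ hN hi]
    linarith [cellWidth_pos hN]

theorem cellValue_optimalCut {N : ℕ} (hN : 1 ≤ N) (i : ℕ) :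
    cellValue (optimalCut N i) (optimalCut N (i + 1)) =
      clampedPotential (cellWidth N) (optimalCut N (i + 1)) -
        clampedPotential (cellWidth N) (optimalCut N i) + cellWidth N ^ 3 / 6 := by
  have hw := cellWidth_pos hN
  rcases eq_or_ne i 0 with rfl | hi
  · rw [optimalCut_zero, zero_add, optimalCut_one hN]
    exact cellValue_eq_clampedPotential_of_le hw.le (by linarith [cellWidth_le_one hN])
  · rw [optimalCut_succ hN hi]
    exact cellValue_eq_clampedPotential_of_nonneg hw.le (optimalCut_nonneg hN hi)

/-- For `Z` uniform on `[-1/2, 1/2]` partitioned into `N` consecutive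
intervals, the cut points maximizing `∑ₙ πₙ max{0,zₙ}²` (with `πₙ = ẑₙ - ẑₙ₋₁` and
`zₙ = (ẑₙ₋₁ + ẑₙ)/2`) are `ẑₙ = (2n-1)/(4N-2)` for `n = 1, …, N-1`. -/
theorem optimal_cutpoints_uniform (N : ℕ) (hN : 1 ≤ N)
    (zstar : Fin (N + 1) → ℝ)
    (hzstar : ∀ i : Fin (N + 1),
      zstar i = if (i : ℕ) = 0 then -(1 / 2) else ((2 * (i : ℕ) - 1 : ℝ)) / (4 * N - 2)) :
    (zstar 0 = -(1 / 2) ∧ zstar (Fin.last N) = 1 / 2 ∧ Monotone zstar) ∧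
    ∀ z : Fin (N + 1) → ℝ, z 0 = -(1 / 2) → z (Fin.last N) = 1 / 2 → Monotone z →
      (∑ n : Fin N, (z n.succ - z n.castSucc) * (max 0 ((z n.castSucc + z n.succ) / 2)) ^ 2) ≤
      (∑ n : Fin N,
        (zstar n.succ - zstar n.castSucc) * (max 0 ((zstar n.castSucc + zstar n.succ) / 2)) ^ 2) := by
  obtain rfl : zstar = fun i : Fin (N + 1) => optimalCut N i := funext hzstar
  refine ⟨⟨optimalCut_zero N, optimalCut_self hN,
    (monotone_optimalCut hN).comp Fin.val_strictMono.monotone⟩, fun z h0 hlast hz => ?_⟩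
  calc ∑ n : Fin N, cellValue (z n.castSucc) (z n.succ)
      ≤ clampedPotential (cellWidth N) (z (Fin.last N)) - clampedPotential (cellWidth N) (z 0) +
          N * (cellWidth N ^ 3 / 6) := sum_cellValue_le_of_monotone (cellWidth_pos hN).le hz
    _ = clampedPotential (cellWidth N) (optimalCut N N) -
          clampedPotential (cellWidth N) (optimalCut N 0) + N * (cellWidth N ^ 3 / 6) := by
      rw [h0, hlast, optimalCut_zero, optimalCut_self hN]
    _ = ∑ n : Fin N, cellValue (optimalCut N n) (optimalCut N (n + 1)) :=
      (sum_clampedPotential_sub_add _ fun i : Fin (N + 1) => optimalCut N i).symm.trans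
        (sum_congr rfl fun n _ => (cellValue_optimalCut hN n).symm)
end

section
/- Let P1 be an atomless probability measure and Z an integrable random variable. For every measurable set A with P1(A) > 0 and every ε ∈ (0, P1(A)], there exists a measurable subset A_ε ⊆ A with P1(A_ε) = ε and E[Z | A_ε] = E[Z | A]. -/
/-!
Sierpiński's theorem (an atomless measure takes on subsets of `A` every value in `[0, μ A]`),
applied along repeated halvings, gives a monotone family `S t ⊆ A` with `μ (S t) = t μ(A)` for
`t ∈ [0, 1]`. For the centred variable `Y = Z - E[Z | A]`, `H t = ∫_{S t} Y` is continuous and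
vanishes outside `(0, 1)`. The cyclic window `(S (t + p) \ S t) ∪ S (t + p - 1)` has measure
`p μ(A)` for every `t ∈ [0, 1]`, and the integral of `Y` over it is
`H (t + p) + H (t + p - 1) - H t`, which is `≤ 0` where `H` is maximal and `≥ 0` where `H` is
minimal. By the intermediate value theorem some window carries integral `0`.
-/

open MeasureTheory Set Filter Topology
open scoped ENNReal

section Analysis

/-- For `s ∈ [0, 2]`, `H s + H (s - 1)` is the `1`-periodic extension of `H`, so this is the
horizontal chord property of continuous periodic functions. -/
theorem exists_horizontal_chord {H : ℝ → ℝ} (hH : Continuous H)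
    (hH_out : ∀ s ∉ Ioo (0 : ℝ) 1, H s = 0) (p : ℝ) :
    ∃ t ∈ Icc (0 : ℝ) 1, H (t + p) + H (t + p - 1) = H t := by
  obtain ⟨tmax, htmax, hmax⟩ :=
    isCompact_Icc.exists_isMaxOn (nonempty_Icc.2 zero_le_one) hH.continuousOn
  obtain ⟨tmin, htmin, hmin⟩ :=
    isCompact_Icc.exists_isMinOn (nonempty_Icc.2 zero_le_one) hH.continuousOn
  have hH0 : H 0 = 0 := hH_out 0 (by simp)
  have hle : ∀ s, H s ≤ H tmax := fun s => by
    by_cases hs : s ∈ Icc (0 : ℝ) 1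
    · exact hmax hs
    · rw [hH_out s fun h => hs (Ioo_subset_Icc_self h), ← hH0]
      exact hmax (left_mem_Icc.2 zero_le_one)
  have hge : ∀ s, H tmin ≤ H s := fun s => by
    by_cases hs : s ∈ Icc (0 : ℝ) 1
    · exact hmin hs
    · rw [hH_out s fun h => hs (Ioo_subset_Icc_self h), ← hH0]
      exact hmin (left_mem_Icc.2 zero_le_one)
  have hone_zero : ∀ s, H s = 0 ∨ H (s - 1) = 0 := fun s => by
    by_cases hs : s ∈ Ioo (0 : ℝ) 1
    · exact .inr (hH_out _ fun h => by linarith [hs.2, h.1])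
    · exact .inl (hH_out s hs)
  set g : ℝ → ℝ := fun t => H (t + p) + H (t + p - 1) - H t
  have hg_max : g tmax ≤ 0 := by
    rcases hone_zero (tmax + p) with h | h <;> simp only [g, h] <;>
      linarith [hle (tmax + p), hle (tmax + p - 1)]
  have hg_min : 0 ≤ g tmin := by
    rcases hone_zero (tmin + p) with h | h <;> simp only [g, h] <;>
      linarith [hge (tmin + p), hge (tmin + p - 1)]
  obtain ⟨t, ht, hgt⟩ := intermediate_value_uIcc (a := tmin) (b := tmax) (f := g)
    (by fun_prop) (mem_uIcc.2 (.inr ⟨hg_max, hg_min⟩))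
  exact ⟨t, uIcc_subset_Icc htmin htmax ht, by linarith [hgt]⟩

variable {α ι E : Type*} [MeasurableSpace α] {μ : Measure α}
  [NormedAddCommGroup E] [NormedSpace ℝ E]

theorem setIntegral_sdiff_union {f : α → E} {a b c : Set α} (hab : a ⊆ b) (hbc : b ⊆ c)
    (ha : MeasurableSet a) (hb : MeasurableSet b) (hf : IntegrableOn f c μ) :
    ∫ x in (c \ b) ∪ a, f x ∂μ = ∫ x in c, f x ∂μ - ∫ x in b, f x ∂μ + ∫ x in a, f x ∂μ := by
  rw [setIntegral_union (disjoint_sdiff_left.mono_right hab) ha (hf.mono_set sdiff_subset)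
    (hf.mono_set (hab.trans hbc)), setIntegral_sdiff hb hf hbc]

theorem continuous_setIntegral_of_monotone [IsFiniteMeasure μ] [TopologicalSpace ι]
    [LinearOrder ι] {S : ι → Set α} (hS : Monotone S) (hS_meas : ∀ t, MeasurableSet (S t))
    (hS_cont : Continuous fun t => μ.real (S t)) {f : α → E} (hf : Integrable f μ) :
    Continuous fun t => ∫ x in S t, f x ∂μ := by
  refine continuous_iff_continuousAt.2 fun t => ?_
  have hsdiff_le : ∀ s u, μ.real (S s \ S u) ≤ |μ.real (S s) - μ.real (S u)| := fun s u => by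
    rcases le_total s u with h | h
    · simp [sdiff_eq_empty.2 (hS h)]
    · rw [measureReal_sdiff (hS h) (hS_meas u)]
      exact le_abs_self _
  have hsmall : ∀ T : ι → Set α, (∀ s, μ.real (T s) ≤ |μ.real (S s) - μ.real (S t)|) →
      Tendsto (fun s => ∫ x in T s, f x ∂μ) (𝓝 t) (𝓝 0) := fun T hT => by
    refine hf.tendsto_setIntegral_nhds_zero ?_
    have hreal : Tendsto (fun s => μ.real (T s)) (𝓝 t) (𝓝 0) :=
      squeeze_zero (fun s => measureReal_nonneg) hT
        ((tendsto_iff_norm_sub_tendsto_zero.1 (hS_cont.tendsto t)))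
    have hofReal : (fun s => μ (T s)) = fun s => ENNReal.ofReal (μ.real (T s)) :=
      funext fun s => (ofReal_measureReal (measure_ne_top μ _)).symm
    rw [Function.comp_def, hofReal, ← ENNReal.ofReal_zero]
    exact ENNReal.tendsto_ofReal hreal
  have hsplit : ∀ s, ∫ x in S s, f x ∂μ =
      ∫ x in S t, f x ∂μ + (∫ x in S s \ S t, f x ∂μ - ∫ x in S t \ S s, f x ∂μ) := fun s => by
    have hs := integral_inter_add_sdiff (s := S s) (hS_meas t) hf.integrableOn
    have ht := integral_inter_add_sdiff (s := S t) (hS_meas s) hf.integrableOn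
    rw [inter_comm] at ht
    rw [← hs, ← ht]
    abel
  have hlim := tendsto_const_nhds (x := ∫ x in S t, f x ∂μ) |>.add
    ((hsmall _ fun s => hsdiff_le s t).sub
      (hsmall _ fun s => abs_sub_comm (μ.real (S t)) _ ▸ hsdiff_le t s))
  rw [sub_zero, add_zero] at hlim
  exact hlim.congr fun s => (hsplit s).symm

end Analysis

section Dyadic

variable {Ω : Type*}

/-- `dyadicSets half A n k` is the union of the first `k` of the `2 ^ n` pieces into which `n`
rounds of halving with `half` cut `A` (it is `A` itself once `k ≥ 2 ^ n`). -/
def dyadicSets (half : Set Ω → Set Ω) (A : Set Ω) : ℕ → ℕ → Set Ω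
  | 0, k => if k = 0 then ∅ else A
  | n + 1, k => dyadicSets half A n (k / 2) ∪
      if k % 2 = 0 then ∅ else half (dyadicSets half A n (k / 2 + 1) \ dyadicSets half A n (k / 2))

variable {half : Set Ω → Set Ω} {A : Set Ω}

@[simp]
theorem dyadicSets_succ_two_mul (n k : ℕ) :
    dyadicSets half A (n + 1) (2 * k) = dyadicSets half A n k := by
  simp [dyadicSets]

theorem dyadicSets_succ_two_mul_add_one (n k : ℕ) :
    dyadicSets half A (n + 1) (2 * k + 1) =
      dyadicSets half A n k ∪ half (dyadicSets half A n (k + 1) \ dyadicSets half A n k) := by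
  simp [dyadicSets, Nat.add_mod, show (2 * k + 1) / 2 = k by omega]

theorem dyadicSets_subset (hhalf : ∀ X, half X ⊆ X) (n k : ℕ) : dyadicSets half A n k ⊆ A := by
  induction n generalizing k with
  | zero => unfold dyadicSets; split_ifs <;> simp
  | succ n ih =>
    obtain ⟨j, rfl | rfl⟩ := Nat.even_or_odd' k
    · simpa using ih j
    · rw [dyadicSets_succ_two_mul_add_one]
      exact union_subset (ih j) ((hhalf _).trans (sdiff_subset.trans (ih _)))

theorem monotone_dyadicSets (hhalf : ∀ X, half X ⊆ X) (n : ℕ) :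
    Monotone (dyadicSets half A n) := by
  induction n with
  | zero =>
    refine monotone_nat_of_le_succ fun k => ?_
    unfold dyadicSets; split_ifs <;> simp_all
  | succ n ih =>
    refine monotone_nat_of_le_succ fun k => ?_
    obtain ⟨j, rfl | rfl⟩ := Nat.even_or_odd' k
    · rw [dyadicSets_succ_two_mul_add_one, dyadicSets_succ_two_mul]
      exact subset_union_left
    · rw [dyadicSets_succ_two_mul_add_one, show 2 * j + 1 + 1 = 2 * (j + 1) by ring,
        dyadicSets_succ_two_mul]
      exact union_subset (ih j.le_succ) ((hhalf _).trans sdiff_subset)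

def dyadicFamily (half : Set Ω → Set Ω) (A : Set Ω) (t : ℝ) : Set Ω :=
  ⋃ n, dyadicSets half A n ⌊t * 2 ^ n⌋₊

theorem monotone_dyadicSets_floor (hhalf : ∀ X, half X ⊆ X) (t : ℝ) :
    Monotone fun n => dyadicSets half A n ⌊t * 2 ^ n⌋₊ := by
  refine monotone_nat_of_le_succ fun n => ?_
  rw [← dyadicSets_succ_two_mul]
  refine monotone_dyadicSets hhalf _ ?_
  rcases le_total t 0 with ht | ht
  · simp [Nat.floor_of_nonpos (mul_nonpos_of_nonpos_of_nonneg ht (pow_nonneg zero_le_two n))]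
  rw [Nat.le_floor_iff (by positivity), pow_succ]
  push_cast
  nlinarith [Nat.floor_le (by positivity : 0 ≤ t * 2 ^ n)]

theorem monotone_dyadicFamily (hhalf : ∀ X, half X ⊆ X) : Monotone (dyadicFamily half A) :=
  fun s t hst => iUnion_mono fun n =>
    monotone_dyadicSets hhalf n (Nat.floor_mono (by gcongr))

theorem dyadicFamily_subset (hhalf : ∀ X, half X ⊆ X) (t : ℝ) : dyadicFamily half A t ⊆ A :=
  iUnion_subset fun n => dyadicSets_subset hhalf n _

variable [MeasurableSpace Ω]

theorem measurableSet_dyadicSets (hA : MeasurableSet A)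
    (hhalf : ∀ X, MeasurableSet X → MeasurableSet (half X)) (n k : ℕ) :
    MeasurableSet (dyadicSets half A n k) := by
  induction n generalizing k with
  | zero => unfold dyadicSets; split_ifs <;> simp [hA]
  | succ n ih =>
    obtain ⟨j, rfl | rfl⟩ := Nat.even_or_odd' k
    · simpa using ih j
    · rw [dyadicSets_succ_two_mul_add_one]
      exact (ih j).union (hhalf _ ((ih _).diff (ih j)))

theorem measureReal_dyadicSets {μ : Measure Ω} [IsFiniteMeasure μ] (hA : MeasurableSet A)
    (hhalf_sub : ∀ X, half X ⊆ X) (hhalf_meas : ∀ X, MeasurableSet X → MeasurableSet (half X))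
    (hhalf : ∀ X, MeasurableSet X → μ.real (half X) = μ.real X / 2) (n k : ℕ) :
    μ.real (dyadicSets half A n k) = min ((k : ℝ) / 2 ^ n) 1 * μ.real A := by
  induction n generalizing k with
  | zero => unfold dyadicSets; split_ifs with hk <;> simp [hk, Nat.one_le_iff_ne_zero]
  | succ n ih =>
    obtain ⟨j, rfl | rfl⟩ := Nat.even_or_odd' k
    · rw [dyadicSets_succ_two_mul, ih, pow_succ]
      push_cast
      rw [mul_comm (2 : ℝ) j, mul_div_mul_right _ _ two_ne_zero]
    · have hmeas := measurableSet_dyadicSets hA hhalf_meas n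
      have hmono := monotone_dyadicSets (A := A) hhalf_sub n j.le_succ
      have hgap := (hmeas (j + 1)).diff (hmeas j)
      rw [dyadicSets_succ_two_mul_add_one, measureReal_union
          (disjoint_left.2 fun x hx hx' => (hhalf_sub _ hx').2 hx) (hhalf_meas _ hgap),
        hhalf _ hgap, measureReal_sdiff hmono (hmeas _), ih, ih]
      rcases lt_or_ge j (2 ^ n) with hj | hj
      · have h1 : ((j + 1 : ℕ) : ℝ) ≤ 2 ^ n := by exact_mod_cast hj
        have h2 : ((2 * j + 1 : ℕ) : ℝ) ≤ 2 ^ (n + 1) := by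
          rw [pow_succ]; push_cast at h1 ⊢; linarith
        rw [min_eq_left ((div_le_one (by positivity)).2 h1),
          min_eq_left ((div_le_one (by positivity)).2 h2),
          min_eq_left ((div_le_one (by positivity)).2 ((Nat.cast_le.2 j.le_succ).trans h1))]
        push_cast; field_simp; ring
      · have h1 : (2 : ℝ) ^ n ≤ j := by exact_mod_cast hj
        have h2 : (2 : ℝ) ^ (n + 1) ≤ ((2 * j + 1 : ℕ) : ℝ) := by
          rw [pow_succ]; push_cast; linarith
        rw [min_eq_right ((one_le_div (by positivity)).2 h1),
          min_eq_right ((one_le_div (by positivity)).2 h2),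
          min_eq_right ((one_le_div (by positivity)).2 (h1.trans (Nat.cast_le.2 j.le_succ)))]
        ring

theorem measurableSet_dyadicFamily (hA : MeasurableSet A)
    (hhalf : ∀ X, MeasurableSet X → MeasurableSet (half X)) (t : ℝ) :
    MeasurableSet (dyadicFamily half A t) :=
  .iUnion fun n => measurableSet_dyadicSets hA hhalf n _

theorem measureReal_dyadicFamily {μ : Measure Ω} [IsFiniteMeasure μ] (hA : MeasurableSet A)
    (hhalf_sub : ∀ X, half X ⊆ X) (hhalf_meas : ∀ X, MeasurableSet X → MeasurableSet (half X))
    (hhalf : ∀ X, MeasurableSet X → μ.real (half X) = μ.real X / 2) (t : ℝ) :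
    μ.real (dyadicFamily half A t) = min (max t 0) 1 * μ.real A := by
  have hunion := (ENNReal.tendsto_toReal (measure_ne_top μ _)).comp
    (tendsto_measure_iUnion_atTop (μ := μ) (monotone_dyadicSets_floor (A := A) hhalf_sub t))
  have hfloor : Tendsto (fun n : ℕ => (⌊max t 0 * 2 ^ n⌋₊ : ℝ) / 2 ^ n) atTop (𝓝 (max t 0)) :=
    (tendsto_nat_floor_mul_div_atTop (le_max_right t 0)).comp
      (tendsto_pow_atTop_atTop_of_one_lt one_lt_two)
  refine tendsto_nhds_unique (f := fun n => μ.real (dyadicSets half A n ⌊t * 2 ^ n⌋₊)) hunion ?_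
  simp_rw [measureReal_dyadicSets hA hhalf_sub hhalf_meas hhalf]
  refine ((hfloor.min tendsto_const_nhds).mul_const _).congr fun n => ?_
  congr 3
  rcases le_total t 0 with ht | ht
  · simp [Nat.floor_of_nonpos (mul_nonpos_of_nonpos_of_nonneg ht (pow_nonneg zero_le_two n)), ht]
  · rw [max_eq_left ht]

end Dyadic

section Atomless

variable {Ω : Type*} [MeasurableSpace Ω] {μ : Measure Ω}

/-- One step of the greedy exhaustion proving Sierpiński's theorem, stated for every `D` so that
it can be iterated through `choose`. -/
theorem exists_almost_maximal_extension {ε : ℝ≥0∞} (hε : ε ≠ ∞) (A D : Set Ω) :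
    ∃ C, MeasurableSet C ∧ C ⊆ A \ D ∧ (μ D ≤ ε → μ (D ∪ C) ≤ ε) ∧
      ∀ C', MeasurableSet C' → C' ⊆ A \ D → μ (D ∪ C') ≤ ε → μ C' ≤ 2 * μ C := by
  set s := ⨆ C' ∈ {C' | MeasurableSet C' ∧ C' ⊆ A \ D ∧ μ (D ∪ C') ≤ ε}, μ C'
  have hs_ge : ∀ C', MeasurableSet C' → C' ⊆ A \ D → μ (D ∪ C') ≤ ε → μ C' ≤ s :=
    fun C' hm hsub hle => le_iSup₂_of_le (f := fun C' _ => μ C') C' ⟨hm, hsub, hle⟩ le_rfl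
  rcases eq_or_ne s 0 with hs | hs
  · exact ⟨∅, .empty, empty_subset _, by simp, fun C' hm hsub hle => by
      simpa [hs] using hs_ge C' hm hsub hle⟩
  have hs_top : s ≠ ∞ :=
    ne_top_of_le_ne_top hε (iSup₂_le fun C' hC' => (measure_mono subset_union_right).trans hC'.2.2)
  obtain ⟨C, hC⟩ := lt_iSup_iff.1 (ENNReal.half_lt_self hs hs_top)
  obtain ⟨⟨hC_meas, hC_sub, hC_le⟩, hC⟩ := lt_iSup_iff.1 hC
  refine ⟨C, hC_meas, hC_sub, fun _ => hC_le, fun C' hm hsub hle => ?_⟩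
  calc μ C' ≤ s := hs_ge C' hm hsub hle
    _ ≤ 2 * μ C := by
      rw [mul_comm]; exact (ENNReal.div_le_iff (by simp) (by simp)).1 hC.le

theorem exists_greedy_exhaustion {ε : ℝ≥0∞} (hε : ε ≠ ∞) (A : Set Ω) :
    ∃ B ⊆ A, MeasurableSet B ∧ μ B ≤ ε ∧
      ∀ C, MeasurableSet C → C ⊆ A \ B → μ B + μ C ≤ ε → μ C = 0 := by
  choose next hnext_meas hnext_sub hnext_le hnext_max using
    fun D => exists_almost_maximal_extension (μ := μ) hε A D
  let B : ℕ → Set Ω := fun n => Nat.rec ∅ (fun _ D => D ∪ next D) n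
  have hB_succ : ∀ n, B (n + 1) = B n ∪ next (B n) := fun n => rfl
  have hB : ∀ n, MeasurableSet (B n) ∧ B n ⊆ A ∧ μ (B n) ≤ ε := fun n => by
    induction n with
    | zero => simp [B]
    | succ n ih =>
      rw [hB_succ]
      exact ⟨ih.1.union (hnext_meas _), union_subset ih.2.1 ((hnext_sub _).trans sdiff_subset),
        hnext_le _ ih.2.2⟩
  have hB_mono : Monotone B := monotone_nat_of_le_succ fun n => subset_union_left
  refine ⟨⋃ n, B n, iUnion_subset fun n => (hB n).2.1, .iUnion fun n => (hB n).1,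
    hB_mono.measure_iUnion ▸ iSup_le fun n => (hB n).2.2, fun C hC_meas hC_sub hC_le => ?_⟩
  -- `C` is a candidate at every greedy step, so each step adds at least `μ C / 2`
  have hstep : ∀ n, μ C ≤ 2 * μ (next (B n)) := fun n =>
    hnext_max _ C hC_meas (hC_sub.trans (sdiff_subset_sdiff_right (subset_iUnion B n)))
      ((measure_union_le _ _).trans <|
        (add_le_add_left (measure_mono (subset_iUnion B n)) _).trans hC_le)
  have hgrowth : ∀ n : ℕ, n * μ C ≤ 2 * μ (B n) := fun n => by
    induction n with
    | zero => simp
    | succ n ih =>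
      rw [hB_succ, measure_union (disjoint_left.2 fun x hx hx' => (hnext_sub _ hx').2 hx)
        (hnext_meas _), mul_add, Nat.cast_succ, add_mul, one_mul]
      exact add_le_add ih (hstep n)
  by_contra hC
  obtain ⟨n, hn⟩ :=
    ENNReal.exists_nat_mul_gt hC (ENNReal.mul_ne_top (ENNReal.ofNat_ne_top (n := 2)) hε)
  exact (hn.trans_le (hgrowth n)).not_ge (by gcongr; exact (hB n).2.2)

def IsAtomless (μ : Measure Ω) : Prop :=
  ∀ A : Set Ω, MeasurableSet A → 0 < μ A → ∃ B ⊆ A, MeasurableSet B ∧ 0 < μ B ∧ μ B < μ A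

variable [IsFiniteMeasure μ] {A : Set Ω}

theorem IsAtomless.exists_pos_measure_le_half (hμ : IsAtomless μ) (hA : MeasurableSet A)
    (hA_pos : 0 < μ A) : ∃ B ⊆ A, MeasurableSet B ∧ 0 < μ B ∧ μ B ≤ μ A / 2 := by
  obtain ⟨C, hCA, hC_meas, hC_pos, hC_lt⟩ := hμ A hA hA_pos
  rcases le_total (μ C) (μ A / 2) with hC | hC
  · exact ⟨C, hCA, hC_meas, hC_pos, hC⟩
  refine ⟨A \ C, sdiff_subset, hA.diff hC_meas, ?_, ?_⟩ <;>
    rw [measure_sdiff hCA hC_meas.nullMeasurableSet (measure_ne_top μ C)]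
  · exact tsub_pos_of_lt hC_lt
  · calc μ A - μ C ≤ μ A - μ A / 2 := tsub_le_tsub_left hC _
      _ = μ A / 2 := ENNReal.sub_half (measure_ne_top μ A)

theorem IsAtomless.exists_pos_measure_le (hμ : IsAtomless μ) (hA : MeasurableSet A)
    (hA_pos : 0 < μ A) {δ : ℝ≥0∞} (hδ : 0 < δ) :
    ∃ B ⊆ A, MeasurableSet B ∧ 0 < μ B ∧ μ B ≤ δ := by
  have hsmall : ∀ n : ℕ, ∃ B ⊆ A, MeasurableSet B ∧ 0 < μ B ∧ μ B ≤ μ A * 2⁻¹ ^ n := by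
    intro n
    induction n with
    | zero => exact ⟨A, subset_rfl, hA, hA_pos, by simp⟩
    | succ n ih =>
      obtain ⟨B, hBA, hB_meas, hB_pos, hB_le⟩ := ih
      obtain ⟨C, hCB, hC_meas, hC_pos, hC_le⟩ := hμ.exists_pos_measure_le_half hB_meas hB_pos
      refine ⟨C, hCB.trans hBA, hC_meas, hC_pos, hC_le.trans ?_⟩
      rw [pow_succ, ← mul_assoc, ← div_eq_mul_inv]
      gcongr
  have hlim : Tendsto (fun n : ℕ => μ A * 2⁻¹ ^ n) atTop (𝓝 0) := by
    simpa using ENNReal.Tendsto.const_mul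
      (ENNReal.tendsto_pow_atTop_nhds_zero_of_lt_one (by norm_num)) (Or.inr (measure_ne_top μ A))
  obtain ⟨n, hn⟩ := ((tendsto_order.1 hlim).2 δ hδ).exists
  obtain ⟨B, hBA, hB_meas, hB_pos, hB_le⟩ := hsmall n
  exact ⟨B, hBA, hB_meas, hB_pos, hB_le.trans hn.le⟩

theorem IsAtomless.exists_subset_measure_eq (hμ : IsAtomless μ) (hA : MeasurableSet A)
    {ε : ℝ≥0∞} (hε : ε ≤ μ A) : ∃ B ⊆ A, MeasurableSet B ∧ μ B = ε := by
  obtain ⟨B, hBA, hB_meas, hB_le, hB_max⟩ :=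
    exists_greedy_exhaustion (μ := μ) (ne_top_of_le_ne_top (measure_ne_top μ A) hε) A
  refine ⟨B, hBA, hB_meas, le_antisymm hB_le ?_⟩
  by_contra! hlt
  have hAB_pos : 0 < μ (A \ B) := by
    rw [measure_sdiff hBA hB_meas.nullMeasurableSet (measure_ne_top μ B)]
    exact tsub_pos_of_lt (hlt.trans_le hε)
  obtain ⟨C, hC_sub, hC_meas, hC_pos, hC_le⟩ :=
    hμ.exists_pos_measure_le (hA.diff hB_meas) hAB_pos (tsub_pos_of_lt hlt)
  exact hC_pos.ne' (hB_max C hC_meas hC_sub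
    ((add_le_add le_rfl hC_le).trans (add_tsub_cancel_of_le hlt.le).le))

theorem IsAtomless.exists_half (hμ : IsAtomless μ) (X : Set Ω) :
    ∃ Y ⊆ X, MeasurableSet X → MeasurableSet Y ∧ μ.real Y = μ.real X / 2 := by
  by_cases hX : MeasurableSet X
  · obtain ⟨Y, hYX, hY_meas, hY⟩ := hμ.exists_subset_measure_eq hX ENNReal.half_le_self
    exact ⟨Y, hYX, fun _ => ⟨hY_meas, by simp [measureReal_def, hY, ENNReal.toReal_div]⟩⟩
  · exact ⟨∅, empty_subset _, fun h => absurd h hX⟩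

theorem IsAtomless.exists_monotone_subsets_measureReal_eq (hμ : IsAtomless μ)
    (hA : MeasurableSet A) :
    ∃ S : ℝ → Set Ω, Monotone S ∧ (∀ t, MeasurableSet (S t)) ∧ (∀ t, S t ⊆ A) ∧
      ∀ t, μ.real (S t) = min (max t 0) 1 * μ.real A := by
  choose half hhalf_sub hhalf using hμ.exists_half
  exact ⟨dyadicFamily half A, monotone_dyadicFamily hhalf_sub,
    measurableSet_dyadicFamily hA (fun X hX => (hhalf X hX).1), dyadicFamily_subset hhalf_sub,
    measureReal_dyadicFamily hA hhalf_sub (fun X hX => (hhalf X hX).1) fun X hX => (hhalf X hX).2⟩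

theorem IsAtomless.exists_subset_measureReal_eq_setIntegral_eq_zero (hμ : IsAtomless μ)
    (hA : MeasurableSet A) {f : Ω → ℝ} (hf : Integrable f μ) (hfA : ∫ x in A, f x ∂μ = 0)
    {p : ℝ} (hp0 : 0 ≤ p) (hp1 : p ≤ 1) :
    ∃ B ⊆ A, MeasurableSet B ∧ μ.real B = p * μ.real A ∧ ∫ x in B, f x ∂μ = 0 := by
  obtain ⟨S, hS_mono, hS_meas, hS_sub, hS_measure⟩ := hμ.exists_monotone_subsets_measureReal_eq hA
  have hH_out : ∀ s ∉ Ioo (0 : ℝ) 1, ∫ x in S s, f x ∂μ = 0 := fun s hs => by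
    rcases le_or_gt s 0 with hs0 | hs0
    · refine setIntegral_measure_zero _ ((measureReal_eq_zero_iff (measure_ne_top μ _)).1 ?_)
      simp [hS_measure, hs0]
    · have hs1 : 1 ≤ s := by by_contra h; exact hs ⟨hs0, by linarith⟩
      rw [← hfA]
      refine setIntegral_congr_set (ae_eq_of_subset_of_measure_ge (hS_sub s) ?_
        (hS_meas s).nullMeasurableSet (measure_ne_top μ _))
      rw [← ofReal_measureReal, ← ofReal_measureReal, hS_measure]
      simp [max_eq_left (zero_le_one.trans hs1), min_eq_right hs1]
  obtain ⟨t, ht, hchord⟩ := exists_horizontal_chord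
    (continuous_setIntegral_of_monotone hS_mono hS_meas (by simp_rw [hS_measure]; fun_prop) hf)
    hH_out p
  have hlow : S (t + p - 1) ⊆ S t := hS_mono (by linarith)
  have hhigh : S t ⊆ S (t + p) := hS_mono (by linarith [ht.1])
  -- the window `[t, t + p)` of the circle `ℝ / ℤ`, read through `S`
  refine ⟨(S (t + p) \ S t) ∪ S (t + p - 1),
    union_subset (sdiff_subset.trans (hS_sub _)) (hS_sub _),
    ((hS_meas _).diff (hS_meas _)).union (hS_meas _), ?_, ?_⟩
  · rw [measureReal_union (disjoint_sdiff_left.mono_right hlow) (hS_meas _),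
      measureReal_sdiff hhigh (hS_meas _), hS_measure, hS_measure, hS_measure]
    have hclamp : min (max (t + p) 0) 1 - min (max t 0) 1 + min (max (t + p - 1) 0) 1 = p := by
      obtain ⟨ht0, ht1⟩ := ht
      rcases le_total (t + p) 1 with h | h
      · rw [max_eq_left (by linarith), min_eq_left h, max_eq_left ht0, min_eq_left ht1,
          max_eq_right (by linarith), min_eq_left zero_le_one]
        ring
      · rw [max_eq_left (by linarith), min_eq_right h, max_eq_left ht0, min_eq_left ht1,
          max_eq_left (by linarith), min_eq_left (by linarith)]
        ring
    linear_combination μ.real A * hclamp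
  · rw [setIntegral_sdiff_union hlow hhigh (hS_meas _) (hS_meas _) hf.integrableOn]
    linarith

end Atomless

/-- Lemma 3: For an atomless probability measure `P1` and integrable `Z`,
every set `A` of positive measure contains, for each `ε ∈ (0, P1 A]`, a subset of
measure exactly `ε` with the same conditional mean of `Z` as `A`. -/
theorem exists_subset_same_conditional_mean {Ω : Type*} [MeasurableSpace Ω]
    (P1 : Measure Ω) [IsProbabilityMeasure P1]
    (hatomless : ∀ A : Set Ω, MeasurableSet A → 0 < P1 A →
      ∃ B ⊆ A, MeasurableSet B ∧ 0 < P1 B ∧ P1 B < P1 A)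
    (Z : Ω → ℝ) (hZ : Integrable Z P1) :
    ∀ A : Set Ω, MeasurableSet A → 0 < P1 A →
      ∀ ε : ℝ≥0∞, 0 < ε → ε ≤ P1 A →
        ∃ B ⊆ A, MeasurableSet B ∧ P1 B = ε ∧
          (∫ ω in B, Z ω ∂P1) / (P1 B).toReal = (∫ ω in A, Z ω ∂P1) / (P1 A).toReal := by
  intro A hA hA_pos ε hε_pos hε_le
  have hε_top : ε ≠ ∞ := ne_top_of_le_ne_top (measure_ne_top P1 A) hε_le
  have hA_real : 0 < P1.real A := ENNReal.toReal_pos hA_pos.ne' (measure_ne_top P1 A)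
  have hε_real : ε.toReal ≤ P1.real A := ENNReal.toReal_mono (measure_ne_top P1 A) hε_le
  set c := (∫ ω in A, Z ω ∂P1) / P1.real A
  have hcentered : ∀ B, ∫ ω in B, (Z ω - c) ∂P1 = ∫ ω in B, Z ω ∂P1 - P1.real B * c := fun B => by
    rw [integral_sub hZ.integrableOn (integrable_const c), setIntegral_const, smul_eq_mul]
  have hcentered_A : ∫ ω in A, (Z ω - c) ∂P1 = 0 := by
    rw [hcentered, mul_div_cancel₀ _ hA_real.ne', sub_self]
  obtain ⟨B, hBA, hB_meas, hB_measure, hB_int⟩ :=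
    IsAtomless.exists_subset_measureReal_eq_setIntegral_eq_zero hatomless hA
      (f := fun ω => Z ω - c) (hZ.sub (integrable_const c)) hcentered_A
      (div_nonneg ENNReal.toReal_nonneg hA_real.le) (div_le_one_of_le₀ hε_real hA_real.le)
  have hB_real : P1.real B = ε.toReal := by rw [hB_measure]; field_simp
  refine ⟨B, hBA, hB_meas,
    (ENNReal.toReal_eq_toReal_iff' (measure_ne_top P1 B) hε_top).1 hB_real, ?_⟩
  rw [hcentered, sub_eq_zero] at hB_int
  change _ / P1.real B = c
  rw [hB_int, mul_div_cancel_left₀ _ (hB_real ▸ ENNReal.toReal_pos hε_pos.ne' hε_top).ne']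
end

section
/- Let P be an atomless probability measure and Z a bounded measurable function into ℝ². Fix δ > 0 and a set A with P(A) > 0. Then for every ε ∈ (0, P(A)], there exists A_ε ⊆ A with P(A_ε) = ε and ‖z(A_ε) − z(A)‖_∞ < δ, where z(B) denotes the conditional expectation vector E[Z | B]. -/
/-!
Approximate `Z` uniformly within `δ / 4` by a simple function `s`, which is possible because `Z`
takes values in a compact set. By Sierpiński's theorem an atomless finite measure takes every
value in `[0, μ S]` on subsets of `S`, so there is `B ⊆ A` meeting every level set of `s` in the
fraction `ε / P A` of its part in `A`. Then `s` has the same average over `B` as over `A`, and the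
averages of `Z` differ by at most twice the approximation error.
-/

open MeasureTheory Set
open scoped ENNReal

namespace ENNReal

theorem exists_forall_le_two_mul {ι : Type*} {p : ι → Prop} (f : ι → ℝ≥0∞) (hp : ∃ i, p i)
    (hfin : ⨆ (i) (_ : p i), f i ≠ ∞) : ∃ i, p i ∧ ∀ j, p j → f j ≤ 2 * f i := by
  set t := ⨆ (i) (_ : p i), f i
  have hle : ∀ j, p j → f j ≤ t := fun j hj => le_iSup₂ (f := fun i (_ : p i) => f i) j hj
  rcases eq_zero_or_pos t with ht | ht
  · obtain ⟨i, hi⟩ := hp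
    exact ⟨i, hi, fun j hj => (hle j hj).trans (ht.trans_le zero_le)⟩
  · obtain ⟨i, hi⟩ := lt_iSup_iff.1 (ENNReal.half_lt_self ht.ne' hfin)
    obtain ⟨hpi, hlt⟩ := lt_iSup_iff.1 hi
    refine ⟨i, hpi, fun j hj => (hle j hj).trans ?_⟩
    calc t = 2 * (t / 2) := (ENNReal.mul_div_cancel two_ne_zero ofNat_ne_top).symm
      _ ≤ 2 * f i := by gcongr

theorem eq_zero_of_forall_add_le_succ {a : ℕ → ℝ≥0∞} {c : ℝ≥0∞} (ha : ⨆ n, a n ≠ ∞)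
    (hc : ∀ n, a n + c ≤ a (n + 1)) : c = 0 := by
  by_contra hc0
  obtain ⟨n, hn⟩ : ∃ n, ⨆ n, a n < a n + c := by
    rw [← lt_iSup_iff, ← ENNReal.iSup_add]
    exact ENNReal.lt_add_right ha hc0
  exact (hn.trans_le ((hc n).trans (le_iSup a (n + 1)))).false

end ENNReal

namespace MeasureTheory

variable {Ω : Type*} [MeasurableSpace Ω] {μ : Measure Ω}

namespace SimpleFunc

variable {ν : Measure Ω} {c : ℝ≥0∞}

theorem measure_univ_eq_mul_of_preimage_singleton {β : Type*} (s : SimpleFunc Ω β)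
    (h : ∀ y, μ (s ⁻¹' {y}) = c * ν (s ⁻¹' {y})) : μ univ = c * ν univ := by
  simp only [← s.sum_range_measure_preimage_singleton, h, Finset.mul_sum]

theorem integral_eq_smul_of_preimage_singleton {E : Type*} [NormedAddCommGroup E]
    [NormedSpace ℝ E] [CompleteSpace E] [IsFiniteMeasure μ] [IsFiniteMeasure ν]
    (s : SimpleFunc Ω E)
    (h : ∀ y, μ (s ⁻¹' {y}) = c * ν (s ⁻¹' {y})) :
    ∫ ω, s ω ∂μ = c.toReal • ∫ ω, s ω ∂ν := by
  rw [← s.integral_eq_integral (s.integrable_of_isFiniteMeasure),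
    ← s.integral_eq_integral (s.integrable_of_isFiniteMeasure), integral_eq, integral_eq,
    Finset.smul_sum]
  refine Finset.sum_congr rfl fun y _ => ?_
  rw [measureReal_def, measureReal_def, h, ENNReal.toReal_mul, smul_smul]

theorem exists_forall_dist_lt_of_isCompact {α : Type*} [PseudoMetricSpace α] [MeasurableSpace α]
    [OpensMeasurableSpace α] [TopologicalSpace.SeparableSpace α] [Nonempty α] {f : Ω → α}
    (hf : Measurable f) {K : Set α} (hK : IsCompact K) (hfK : ∀ ω, f ω ∈ K) {h : ℝ}
    (hh : 0 < h) : ∃ s : SimpleFunc Ω α, ∀ ω, dist (f ω) (s ω) < h := by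
  set e := TopologicalSpace.denseSeq α
  obtain ⟨N, hN⟩ : ∃ N, K ⊆ ⋃ k ≤ N, Metric.ball (e k) h := by
    refine hK.elim_directed_cover _ (fun N => isOpen_biUnion fun k _ => Metric.isOpen_ball)
      (fun x _ => ?_) (Monotone.directed_le fun M N hMN => biUnion_mono
        (fun k hk => le_trans hk hMN) fun _ _ => subset_rfl)
    obtain ⟨k, hk⟩ := Metric.denseRange_iff.1 (TopologicalSpace.denseRange_denseSeq α) x h hh
    exact mem_iUnion.2 ⟨k, mem_iUnion₂.2 ⟨k, le_rfl, Metric.mem_ball'.2 (dist_comm x _ ▸ hk)⟩⟩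
  refine ⟨(nearestPt e N).comp f hf, fun ω => ?_⟩
  obtain ⟨k, hk, hmem⟩ := mem_iUnion₂.1 (hN (hfK ω))
  have hnear : dist (nearestPt e N (f ω)) (f ω) ≤ dist (e k) (f ω) := by
    simpa only [edist_dist, ENNReal.ofReal_le_ofReal_iff dist_nonneg] using
      edist_nearestPt_le e (f ω) hk
  rw [coe_comp, Function.comp_apply, dist_comm]
  exact hnear.trans_lt (Metric.mem_ball'.1 hmem)

end SimpleFunc

theorem norm_setIntegral_sub_le_of_norm_sub_le [IsFiniteMeasure μ] {E : Type*}
    [NormedAddCommGroup E] [NormedSpace ℝ E] {f g : Ω → E} (hf : Integrable f μ)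
    (hg : Integrable g μ) {h : ℝ} (hfg : ∀ ω, ‖f ω - g ω‖ ≤ h) (T : Set Ω) :
    ‖∫ ω in T, f ω ∂μ - ∫ ω in T, g ω ∂μ‖ ≤ h * μ.real T := by
  rw [← integral_sub hf.integrableOn hg.integrableOn]
  exact norm_setIntegral_le_of_norm_le_const (measure_lt_top μ T) fun ω _ => hfg ω

/-- For finite measures this is the usual notion of an atomless measure; Mathlib's `NoAtoms`
only asks singletons to be null. -/
def Measure.IsAtomless (μ : Measure Ω) : Prop :=
  ∀ A : Set Ω, MeasurableSet A → 0 < μ A → ∃ B ⊆ A, MeasurableSet B ∧ 0 < μ B ∧ μ B < μ A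

namespace Measure.IsAtomless

variable [IsFiniteMeasure μ]

theorem exists_subset_pos_le_half (hμ : μ.IsAtomless) {B : Set Ω} (hB : MeasurableSet B)
    (hBpos : 0 < μ B) : ∃ C ⊆ B, MeasurableSet C ∧ 0 < μ C ∧ μ C ≤ μ B / 2 := by
  obtain ⟨C, hCB, hCm, hCpos, hClt⟩ := hμ B hB hBpos
  rcases le_or_gt (μ C) (μ B / 2) with hC | hC
  · exact ⟨C, hCB, hCm, hCpos, hC⟩
  · have hdiff : μ (B \ C) = μ B - μ C :=
      measure_sdiff hCB hCm.nullMeasurableSet (measure_ne_top μ C)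
    refine ⟨B \ C, sdiff_subset, hB.diff hCm, hdiff ▸ tsub_pos_of_lt hClt, ?_⟩
    calc μ (B \ C) = μ B - μ C := hdiff
      _ ≤ μ B - μ B / 2 := tsub_le_tsub_left hC.le _
      _ = μ B / 2 := ENNReal.sub_half (measure_ne_top μ B)

theorem exists_subset_pos_le (hμ : μ.IsAtomless) {S : Set Ω} (hS : MeasurableSet S)
    (hSpos : 0 < μ S) {η : ℝ≥0∞} (hη : 0 < η) :
    ∃ B ⊆ S, MeasurableSet B ∧ 0 < μ B ∧ μ B ≤ η := by
  have halving : ∀ n : ℕ, ∃ B ⊆ S, MeasurableSet B ∧ 0 < μ B ∧ μ B ≤ 2⁻¹ ^ n * μ S := by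
    intro n
    induction n with
    | zero => exact ⟨S, subset_rfl, hS, hSpos, by simp⟩
    | succ n ih =>
      obtain ⟨B, hBS, hBm, hBpos, hBle⟩ := ih
      obtain ⟨C, hCB, hCm, hCpos, hCle⟩ := hμ.exists_subset_pos_le_half hBm hBpos
      refine ⟨C, hCB.trans hBS, hCm, hCpos, hCle.trans ?_⟩
      rw [pow_succ, mul_right_comm, ← div_eq_mul_inv]
      gcongr
  have hsmall : ∀ᶠ n in Filter.atTop, 2⁻¹ ^ n * μ S < η := by
    refine (tendsto_order.1 ?_).2 η hη
    simpa using ENNReal.Tendsto.mul_const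
      (ENNReal.tendsto_pow_atTop_nhds_zero_of_lt_one (by norm_num : (2⁻¹ : ℝ≥0∞) < 1))
      (Or.inr (measure_ne_top μ S))
  obtain ⟨n, hn⟩ := hsmall.exists
  obtain ⟨B, hBS, hBm, hBpos, hBle⟩ := halving n
  exact ⟨B, hBS, hBm, hBpos, hBle.trans hn.le⟩

theorem exists_subset_measure_eq (hμ : μ.IsAtomless) {S : Set Ω} (hS : MeasurableSet S)
    {r : ℝ≥0∞} (hr : r ≤ μ S) : ∃ B ⊆ S, MeasurableSet B ∧ μ B = r := by
  -- Greedy exhaustion: repeatedly add a subset of the remainder of at least half the largest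
  -- measure that still fits under `r`.
  have hstep : ∀ U : Set Ω, ∃ C, (C ⊆ S \ U ∧ MeasurableSet C ∧ μ C ≤ r - μ U) ∧
      ∀ D, (D ⊆ S \ U ∧ MeasurableSet D ∧ μ D ≤ r - μ U) → μ D ≤ 2 * μ C := fun U =>
    ENNReal.exists_forall_le_two_mul (fun C => μ C) ⟨∅, empty_subset _, .empty, by simp⟩
      (ne_top_of_le_ne_top (measure_ne_top μ S)
        (iSup₂_le fun C hC => measure_mono (hC.1.trans sdiff_subset)))
  choose C hC hCmax using hstep
  let U : ℕ → Set Ω := fun n => Nat.rec ∅ (fun _ V => V ∪ C V) n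
  have hUsucc : ∀ n, μ (U (n + 1)) = μ (U n) + μ (C (U n)) := fun n =>
    measure_union (disjoint_of_subset_right (hC (U n)).1 disjoint_sdiff_right) (hC (U n)).2.1
  have hU : ∀ n, U n ⊆ S ∧ MeasurableSet (U n) ∧ μ (U n) ≤ r := by
    intro n
    induction n with
    | zero => exact ⟨empty_subset _, .empty, by simp [U]⟩
    | succ n ih =>
      obtain ⟨hCS, hCm, hCr⟩ := hC (U n)
      refine ⟨union_subset ih.1 (hCS.trans sdiff_subset), ih.2.1.union hCm, ?_⟩
      rw [hUsucc]
      calc μ (U n) + μ (C (U n)) ≤ μ (U n) + (r - μ (U n)) := by gcongr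
        _ = r := add_tsub_cancel_of_le ih.2.2
  have hmono : Monotone U := monotone_nat_of_le_succ fun n => subset_union_left
  have hμV : μ (⋃ n, U n) = ⨆ n, μ (U n) := hmono.measure_iUnion
  have hVm : MeasurableSet (⋃ n, U n) := .iUnion fun n => (hU n).2.1
  have hVr : μ (⋃ n, U n) ≤ r := hμV ▸ iSup_le fun n => (hU n).2.2
  refine ⟨⋃ n, U n, iUnion_subset fun n => (hU n).1, hVm, hVr.antisymm (not_lt.1 fun hlt => ?_)⟩
  obtain ⟨D, hDV, hDm, hDpos, hDle⟩ := hμ.exists_subset_pos_le (hS.diff hVm)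
    ((tsub_pos_of_lt (hlt.trans_le hr)).trans_le le_measure_sdiff) (tsub_pos_of_lt hlt)
  have hgrow : ∀ n, μ (U n) + μ D / 2 ≤ μ (U (n + 1)) := by
    intro n
    have hUV : U n ⊆ ⋃ n, U n := subset_iUnion U n
    have hDC : μ D ≤ 2 * μ (C (U n)) := hCmax (U n) D
      ⟨hDV.trans (sdiff_subset_sdiff_right hUV), hDm,
        hDle.trans (tsub_le_tsub_left (measure_mono hUV) r)⟩
    rw [hUsucc]
    gcongr
    exact ENNReal.div_le_of_le_mul (by rwa [mul_comm])
  have hD0 := ENNReal.eq_zero_of_forall_add_le_succ (hμV ▸ measure_ne_top μ _) hgrow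
  simp [ENNReal.div_eq_zero_iff, hDpos.ne'] at hD0

theorem exists_subset_restrict_preimage_singleton_eq_mul (hμ : μ.IsAtomless) {β : Type*}
    (s : SimpleFunc Ω β) {A : Set Ω} (hA : MeasurableSet A) {c : ℝ≥0∞} (hc : c ≤ 1) :
    ∃ B ⊆ A, MeasurableSet B ∧
      ∀ y, μ.restrict B (s ⁻¹' {y}) = c * μ.restrict A (s ⁻¹' {y}) := by
  have hpiece : ∀ y, ∃ B ⊆ s ⁻¹' {y} ∩ A, MeasurableSet B ∧ μ B = c * μ (s ⁻¹' {y} ∩ A) :=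
    fun y => hμ.exists_subset_measure_eq ((s.measurableSet_fiber y).inter hA)
      (mul_le_of_le_one_left' hc)
  choose B hBsub hBm hμB using hpiece
  classical
  refine ⟨⋃ y ∈ s.range, B y, iUnion₂_subset fun y _ => (hBsub y).trans inter_subset_right,
    s.range.measurableSet_biUnion fun y _ => hBm y, fun y => ?_⟩
  have hfiber : s ⁻¹' {y} ∩ ⋃ z ∈ s.range, B z = B y := by
    ext ω
    simp only [mem_inter_iff, mem_preimage, mem_singleton_iff, mem_iUnion, exists_prop]
    constructor
    · rintro ⟨rfl, z, -, hz⟩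
      obtain rfl : s ω = z := (hBsub z hz).1
      exact hz
    · intro hω
      have hy : s ω = y := (hBsub y hω).1
      exact ⟨hy, y, hy ▸ s.mem_range_self ω, hω⟩
  rw [restrict_apply (s.measurableSet_fiber y), restrict_apply (s.measurableSet_fiber y), hfiber,
    hμB]

theorem exists_subset_measure_eq_norm_setAverage_sub_le {E : Type*} [NormedAddCommGroup E]
    [NormedSpace ℝ E] [CompleteSpace E] (hμ : μ.IsAtomless) {f : Ω → E} (hf : Integrable f μ) (s : SimpleFunc Ω E) {h : ℝ} (hfs : ∀ ω, ‖f ω - s ω‖ ≤ h)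
    {A : Set Ω} (hA : MeasurableSet A) {ε : ℝ≥0∞} (hε : 0 < ε) (hεA : ε ≤ μ A) :
    ∃ B ⊆ A, MeasurableSet B ∧ μ B = ε ∧ ‖(⨍ ω in B, f ω ∂μ) - ⨍ ω in A, f ω ∂μ‖ ≤ 2 * h := by
  have hA0 : μ A ≠ 0 := (hε.trans_le hεA).ne'
  set c := ε / μ A
  obtain ⟨B, hBA, hBm, hfiber⟩ :=
    hμ.exists_subset_restrict_preimage_singleton_eq_mul s hA (c := c)
      (ENNReal.div_le_of_le_mul (by rwa [one_mul]))
  have hμB : μ B = ε := by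
    simpa [c, ENNReal.div_mul_cancel hA0 (measure_ne_top μ A)] using
      s.measure_univ_eq_mul_of_preimage_singleton hfiber
  refine ⟨B, hBA, hBm, hμB, ?_⟩
  have hBpos : 0 < μ.real B := ENNReal.toReal_pos (hμB ▸ hε.ne') (measure_ne_top μ B)
  have hcB : c.toReal * μ.real A = μ.real B := by
    rw [measureReal_def, measureReal_def, ← ENNReal.toReal_mul, hμB,
      ENNReal.div_mul_cancel hA0 (measure_ne_top μ A)]
  have hs := s.integral_eq_smul_of_preimage_singleton hfiber
  have hsi := s.integrable_of_isFiniteMeasure (μ := μ)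
  -- The simple function `s` has proportional integrals over `B` and `A`, so only the errors
  -- `f - s` contribute.
  have key : ‖∫ ω in B, f ω ∂μ - c.toReal • ∫ ω in A, f ω ∂μ‖ ≤ 2 * h * μ.real B := calc
    _ = ‖(∫ ω in B, f ω ∂μ - ∫ ω in B, s ω ∂μ)
          - c.toReal • (∫ ω in A, f ω ∂μ - ∫ ω in A, s ω ∂μ)‖ := by
      rw [hs, smul_sub]
      abel
    _ ≤ h * μ.real B + c.toReal * (h * μ.real A) := by
      refine norm_sub_le_of_le (norm_setIntegral_sub_le_of_norm_sub_le hf hsi hfs B) ?_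
      rw [norm_smul, Real.norm_of_nonneg ENNReal.toReal_nonneg]
      exact mul_le_mul_of_nonneg_left (norm_setIntegral_sub_le_of_norm_sub_le hf hsi hfs A)
        ENNReal.toReal_nonneg
    _ = 2 * h * μ.real B := by rw [← hcB]; ring
  have havg : (⨍ ω in B, f ω ∂μ) - ⨍ ω in A, f ω ∂μ
      = (μ.real B)⁻¹ • (∫ ω in B, f ω ∂μ - c.toReal • ∫ ω in A, f ω ∂μ) := by
    have hc0 : c.toReal ≠ 0 := fun h0 => hBpos.ne' (by rw [← hcB, h0, zero_mul])
    rw [setAverage_eq, setAverage_eq, smul_sub, smul_smul, ← hcB, mul_inv_rev,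
      inv_mul_cancel_right₀ hc0]
  rw [havg, norm_smul, norm_inv, Real.norm_of_nonneg hBpos.le]
  calc (μ.real B)⁻¹ * ‖∫ ω in B, f ω ∂μ - c.toReal • ∫ ω in A, f ω ∂μ‖
      ≤ (μ.real B)⁻¹ * (2 * h * μ.real B) := by gcongr
    _ = 2 * h := by field_simp

end Measure.IsAtomless

end MeasureTheory

theorem exists_subset_close_conditional_mean_general {Ω : Type*} [MeasurableSpace Ω]
    (P : Measure Ω) [IsProbabilityMeasure P]
    (hatomless : ∀ A : Set Ω, MeasurableSet A → 0 < P A →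
      ∃ B ⊆ A, MeasurableSet B ∧ 0 < P B ∧ P B < P A)
    (Z : Ω → ℝ × ℝ) (hZm : Measurable Z) (M : ℝ) (hZb : ∀ ω, ‖Z ω‖ ≤ M)
    (δ : ℝ) (hδ : 0 < δ) (A : Set Ω) (hA : MeasurableSet A) :
    ∀ ε : ℝ≥0∞, 0 < ε → ε ≤ P A →
      ∃ B ⊆ A, MeasurableSet B ∧ P B = ε ∧
        ‖(P B).toReal⁻¹ • (∫ ω in B, Z ω ∂P) - (P A).toReal⁻¹ • (∫ ω in A, Z ω ∂P)‖ < δ := by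
  intro ε hε hεA
  obtain ⟨s, hs⟩ := SimpleFunc.exists_forall_dist_lt_of_isCompact hZm
    (isCompact_closedBall (0 : ℝ × ℝ) M) (fun ω => mem_closedBall_zero_iff.2 (hZb ω))
    (by positivity : 0 < δ / 4)
  have hZi : Integrable Z P :=
    (integrable_const M).mono' hZm.aestronglyMeasurable (.of_forall hZb)
  obtain ⟨B, hBA, hBm, hPB, hclose⟩ :=
    Measure.IsAtomless.exists_subset_measure_eq_norm_setAverage_sub_le hatomless hZi s
      (h := δ / 4) (fun ω => by simpa only [dist_eq_norm] using (hs ω).le) hA hε hεA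
  refine ⟨B, hBA, hBm, hPB, ?_⟩
  rw [← measureReal_def, ← measureReal_def, ← setAverage_eq, ← setAverage_eq]
  linarith

/-- For an atomless probability measure `P` and a bounded `ℝ²`-valued `Z`,
every set `A` of positive measure contains, for each `ε ∈ (0, P A]`, a subset of measure
exactly `ε` whose conditional mean vector is within `δ` (sup norm) of that of `A`. -/
theorem exists_subset_close_conditional_mean {Ω : Type*} [MeasurableSpace Ω]
    (P : Measure Ω) [IsProbabilityMeasure P]
    (hatomless : ∀ A : Set Ω, MeasurableSet A → 0 < P A →
      ∃ B ⊆ A, MeasurableSet B ∧ 0 < P B ∧ P B < P A)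
    (Z : Ω → ℝ × ℝ) (hZm : Measurable Z) (M : ℝ) (hZb : ∀ ω, ‖Z ω‖ ≤ M)
    (δ : ℝ) (hδ : 0 < δ) (A : Set Ω) (hA : MeasurableSet A) (hApos : 0 < P A) :
    ∀ ε : ℝ≥0∞, 0 < ε → ε ≤ P A →
      ∃ B ⊆ A, MeasurableSet B ∧ P B = ε ∧
        ‖(P B).toReal⁻¹ • (∫ ω in B, Z ω ∂P) - (P A).toReal⁻¹ • (∫ ω in A, Z ω ∂P)‖ < δ :=
  exists_subset_close_conditional_mean_general P hatomless Z hZm M hZb δ hδ A hA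
end
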